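/- arXiv:2505.17463 — 7 statements merged into one kernel-verified Lean document; each statement's English description precedes it below -/
import Mathlib

section
/- Let Γ, Γ' , ℓ : ℝ^n → ℝ ∪ {+∞} be proper convex lower semicontinuous functions, β ∈ (0,1), λ > 0, and z_0 ∈ ℝ^n. Assume Γ'(u) ≥ β Γ(u) + (1−β) ℓ(u) for all u ∈ ℝ^n. Define Γ^λ(u) := Γ(u) + ‖u − z_0‖²/(2λ) and (Γ')^λ(u) := Γ'(u) + ‖u − z_0‖²/(2λ), and let z be a minimizer of Γ^λ over ℝ^n. Then for every point w ∈ ℝ^n: (Γ')^λ(w) − (1−β) ℓ(w) ≥ β [ Γ^λ(z) + ‖w − z‖²/(2λ) ]. -/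
/-!
Along the segment from `z` to `w`, minimality of `z` for `Γ^λ` and convexity of `Γ` give, after
dividing by the step length and letting it tend to `0`, the first-order inequality
`Γ z ≤ Γ w + ⟪z - z₀, w - z⟫ / λ`. Expanding `‖w - z₀‖² = ‖(z - z₀) + (w - z)‖²` turns it into the
quadratic growth `Γ^λ z + ‖w - z‖² / (2λ) ≤ Γ^λ w`. Multiplying by `β` and combining with
`Γ' ≥ β Γ + (1 - β) ℓ` gives the claim, since `β ‖w - z₀‖² ≤ ‖w - z₀‖²`.
-/

open Set Filter Topology RealInnerProductSpace

theorem le_of_forall_mem_Ioc_le_add_mul {x y c : ℝ} (h : ∀ a ∈ Ioc (0 : ℝ) 1, x ≤ y + a * c) :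
    x ≤ y := by
  have hlim : Tendsto (fun a : ℝ => y + a * c) (𝓝 0) (𝓝 (y + 0 * c)) :=
    tendsto_const_nhds.add (tendsto_id.mul_const c)
  rw [zero_mul, add_zero] at hlim
  refine ge_of_tendsto (hlim.mono_left (nhdsWithin_le_nhds (s := Ioi 0))) ?_
  filter_upwards [Ioc_mem_nhdsGT one_pos] with a ha using h a ha

section ProxGrowth

variable {E : Type*} [NormedAddCommGroup E] [InnerProductSpace ℝ E]

theorem quadratic_growth_of_forall_segment {lam gz gw : ℝ} (hlam : 0 < lam) {d v : E}
    (h : ∀ a ∈ Ioc (0 : ℝ) 1,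
      gz + ‖d‖ ^ 2 / (2 * lam) ≤ (1 - a) * gz + a * gw + ‖d + a • v‖ ^ 2 / (2 * lam)) :
    gz + ‖d‖ ^ 2 / (2 * lam) + ‖v‖ ^ 2 / (2 * lam) ≤ gw + ‖d + v‖ ^ 2 / (2 * lam) := by
  have hfirst_order : gz ≤ gw + ⟪d, v⟫ / lam := by
    refine le_of_forall_mem_Ioc_le_add_mul (c := ‖v‖ ^ 2 / (2 * lam)) fun a ha => ?_
    have hseg := h a ha
    rw [norm_add_sq_real, inner_smul_right, norm_smul, mul_pow, Real.norm_eq_abs, sq_abs] at hseg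
    have hmul : a * gz ≤ a * (gw + ⟪d, v⟫ / lam + a * (‖v‖ ^ 2 / (2 * lam))) := by
      field_simp at hseg ⊢
      nlinarith
    exact le_of_mul_le_mul_left hmul ha.1
  rw [norm_add_sq_real]
  field_simp at hfirst_order ⊢
  nlinarith

theorem EReal.prox_quadratic_growth {f : E → EReal}
    (hf : ∀ x y : E, ∀ a b : ℝ, 0 ≤ a → 0 ≤ b → a + b = 1 →
      f (a • x + b • y) ≤ (a : EReal) * f x + (b : EReal) * f y)
    {lam : ℝ} (hlam : 0 < lam) {z₀ z : E}
    (hz : ∀ u, f z + ((‖z - z₀‖ ^ 2 / (2 * lam) : ℝ) : EReal)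
      ≤ f u + ((‖u - z₀‖ ^ 2 / (2 * lam) : ℝ) : EReal)) (w : E) :
    f z + ((‖z - z₀‖ ^ 2 / (2 * lam) : ℝ) : EReal) + ((‖w - z‖ ^ 2 / (2 * lam) : ℝ) : EReal)
      ≤ f w + ((‖w - z₀‖ ^ 2 / (2 * lam) : ℝ) : EReal) := by
  rcases eq_or_ne (f w) ⊤ with hwt | hwt
  · simp [hwt]
  rcases eq_or_ne (f z) ⊥ with hzb | hzb
  · simp [hzb]
  have hzt : f z ≠ ⊤ := by
    intro h
    have hle := hz w
    rw [h, EReal.top_add_coe] at hle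
    exact (EReal.add_lt_top hwt (EReal.coe_ne_top _)).not_ge hle
  obtain ⟨gz, hgz⟩ : ∃ r : ℝ, f z = r := ⟨_, (EReal.coe_toReal hzt hzb).symm⟩
  have hwb : f w ≠ ⊥ := by
    intro h
    simpa [h, hgz] using hz w
  obtain ⟨gw, hgw⟩ : ∃ r : ℝ, f w = r := ⟨_, (EReal.coe_toReal hwt hwb).symm⟩
  rw [hgz] at hz ⊢
  rw [hgw]
  norm_cast
  rw [show w - z₀ = (z - z₀) + (w - z) by abel]
  refine quadratic_growth_of_forall_segment hlam fun a ha => ?_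
  have hconv := hf z w (1 - a) a (by linarith [ha.2]) ha.1.le (by ring)
  rw [hgz, hgw] at hconv
  have hmin := (hz _).trans (add_le_add_left hconv _)
  rw [show (1 - a) • z + a • w - z₀ = (z - z₀) + a • (w - z) by module] at hmin
  exact_mod_cast hmin

end ProxGrowth

theorem stmt3_general {n : ℕ}
    (Γ Γ' ℓ : EuclideanSpace ℝ (Fin n) → EReal)
    (hΓconv : ∀ x y : EuclideanSpace ℝ (Fin n), ∀ a b : ℝ, 0 ≤ a → 0 ≤ b →
      a + b = 1 → Γ (a • x + b • y) ≤ (a : EReal) * Γ x + (b : EReal) * Γ y)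
    (β : ℝ) (hβ : β ∈ Set.Ioo (0 : ℝ) 1)
    (lam : ℝ) (hlam : 0 < lam)
    (z₀ : EuclideanSpace ℝ (Fin n))
    (hmaj : ∀ u, (β : EReal) * Γ u + ((1 - β : ℝ) : EReal) * ℓ u ≤ Γ' u)
    (z : EuclideanSpace ℝ (Fin n))
    (hz : ∀ u, Γ z + ((‖z - z₀‖ ^ 2 / (2 * lam) : ℝ) : EReal)
      ≤ Γ u + ((‖u - z₀‖ ^ 2 / (2 * lam) : ℝ) : EReal)) :
    ∀ w, ((1 - β : ℝ) : EReal) * ℓ w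
        + (β : EReal) * (Γ z + ((‖z - z₀‖ ^ 2 / (2 * lam) : ℝ) : EReal)
            + ((‖w - z‖ ^ 2 / (2 * lam) : ℝ) : EReal))
      ≤ Γ' w + ((‖w - z₀‖ ^ 2 / (2 * lam) : ℝ) : EReal) := by
  intro w
  have hgrowth := EReal.prox_quadratic_growth hΓconv hlam hz w
  set C : ℝ := ‖w - z₀‖ ^ 2 / (2 * lam)
  have hβ0 : (0 : EReal) ≤ β := by exact_mod_cast hβ.1.le
  calc ((1 - β : ℝ) : EReal) * ℓ w
        + β * (Γ z + ((‖z - z₀‖ ^ 2 / (2 * lam) : ℝ) : EReal)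
            + ((‖w - z‖ ^ 2 / (2 * lam) : ℝ) : EReal))
      ≤ ((1 - β : ℝ) : EReal) * ℓ w + β * (Γ w + C) :=
        add_le_add_right (mul_le_mul_of_nonneg_left hgrowth hβ0) _
    _ = (β * Γ w + ((1 - β : ℝ) : EReal) * ℓ w) + ((β * C : ℝ) : EReal) := by
        rw [EReal.left_distrib_of_nonneg_of_ne_top hβ0 (EReal.coe_ne_top _), EReal.coe_mul]
        abel
    _ ≤ Γ' w + C :=
        add_le_add (hmaj w)
          (EReal.coe_le_coe_iff.2 (mul_le_of_le_one_left (by positivity) hβ.2.le))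

/-- Key inequality for the prox-regularized models of the stochastic cutting
plane framework.  Extended-real-valued (`ℝ ∪ {+∞}`) proper convex lsc functions
are modeled as `EReal`-valued functions that never take the value `⊥ = -∞` and
are somewhere finite.  The conclusion
`(Γ')^λ(w) - (1-β) ℓ(w) ≥ β [Γ^λ(z) + ‖w - z‖²/(2λ)]` is stated in the
equivalent subtraction-free form
`(1-β) ℓ(w) + β [Γ^λ(z) + ‖w - z‖²/(2λ)] ≤ (Γ')^λ(w)`. -/
theorem stmt3 {n : ℕ}
    (Γ Γ' ℓ : EuclideanSpace ℝ (Fin n) → EReal)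
    (hΓconv : ∀ x y : EuclideanSpace ℝ (Fin n), ∀ a b : ℝ, 0 ≤ a → 0 ≤ b →
      a + b = 1 → Γ (a • x + b • y) ≤ (a : EReal) * Γ x + (b : EReal) * Γ y)
    (hΓ'conv : ∀ x y : EuclideanSpace ℝ (Fin n), ∀ a b : ℝ, 0 ≤ a → 0 ≤ b →
      a + b = 1 → Γ' (a • x + b • y) ≤ (a : EReal) * Γ' x + (b : EReal) * Γ' y)
    (hℓconv : ∀ x y : EuclideanSpace ℝ (Fin n), ∀ a b : ℝ, 0 ≤ a → 0 ≤ b →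
      a + b = 1 → ℓ (a • x + b • y) ≤ (a : EReal) * ℓ x + (b : EReal) * ℓ y)
    (hΓlsc : LowerSemicontinuous Γ) (hΓ'lsc : LowerSemicontinuous Γ')
    (hℓlsc : LowerSemicontinuous ℓ)
    (hΓbot : ∀ x, Γ x ≠ ⊥) (hΓtop : ∃ x, Γ x ≠ ⊤)
    (hΓ'bot : ∀ x, Γ' x ≠ ⊥) (hΓ'top : ∃ x, Γ' x ≠ ⊤)
    (hℓbot : ∀ x, ℓ x ≠ ⊥) (hℓtop : ∃ x, ℓ x ≠ ⊤)
    (β : ℝ) (hβ : β ∈ Set.Ioo (0 : ℝ) 1)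
    (lam : ℝ) (hlam : 0 < lam)
    (z₀ : EuclideanSpace ℝ (Fin n))
    (hmaj : ∀ u, (β : EReal) * Γ u + ((1 - β : ℝ) : EReal) * ℓ u ≤ Γ' u)
    (z : EuclideanSpace ℝ (Fin n))
    (hz : ∀ u, Γ z + ((‖z - z₀‖ ^ 2 / (2 * lam) : ℝ) : EReal)
      ≤ Γ u + ((‖u - z₀‖ ^ 2 / (2 * lam) : ℝ) : EReal)) :
    ∀ w, ((1 - β : ℝ) : EReal) * ℓ w
        + (β : EReal) * (Γ z + ((‖z - z₀‖ ^ 2 / (2 * lam) : ℝ) : EReal)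
            + ((‖w - z‖ ^ 2 / (2 * lam) : ℝ) : EReal))
      ≤ Γ' w + ((‖w - z₀‖ ^ 2 / (2 * lam) : ℝ) : EReal) :=
  stmt3_general Γ Γ' ℓ hΓconv β hβ lam hlam z₀ hmaj z hz
end

section
/- Let I ≥ 2 be an integer, β ∈ (0,1), and ℓ_1, …, ℓ_I : ℝ^n → ℝ ∪ {+∞} arbitrary functions. For integers 1 ≤ k ≤ j ≤ I define L_k^j := Σ_{i=k}^{j} β_i^j ℓ_i, where β_k^j := β^{j−k} and β_i^j := (1−β)β^{j−i} for k < i ≤ j. Let B be a set of integers with {1} ⊆ B ⊆ {1, …, I}, let B_j := {k ∈ B : k ≤ j}, and let Γ_j := max_{k ∈ B_j} L_k^j (pointwise maximum). Then Γ_1 = ℓ_1 and, for every 2 ≤ j ≤ I and every u ∈ ℝ^n: if j ∈ B then Γ_j(u) = (1−β) ℓ_j(u) + β·max{ Γ_{j−1}(u), ℓ_j(u) }, and if j ∉ B then Γ_j(u) = (1−β) ℓ_j(u) + β Γ_{j−1}(u). Consequently Γ_j(u) ≥ β Γ_{j−1}(u) + (1−β) ℓ_j(u) for all u and all 2 ≤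 j ≤ I. -/
/-!
Every one-cut model obeys the linear recursion `L_k^{j+1} = β L_k^j + (1-β) ℓ_{j+1}`: each weight
picks up a factor `β` and the new cut enters with weight `1-β`. The map `x ↦ β x + c` is monotone,
so it commutes with finite maxima, and taking the maximum over the old indices `B_j` gives
`β Γ_j + (1-β) ℓ_{j+1}`. If `j+1 ∈ B`, the new model `L_{j+1}^{j+1} = ℓ_{j+1}` joins the maximum;
writing it as `β ℓ_{j+1} + (1-β) ℓ_{j+1}` yields the update with `max {Γ_j, ℓ_{j+1}}`.
Multiplication of `EReal` by a nonnegative real distributes over addition, so `+∞` values are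
harmless.
-/

namespace EReal

theorem coe_mul_sum_of_nonneg {ι : Type*} (s : Finset ι) (f : ι → EReal) {r : ℝ} (hr : 0 ≤ r) :
    (r : EReal) * ∑ i ∈ s, f i = ∑ i ∈ s, (r : EReal) * f i :=
  let mulLeft : EReal →+ EReal :=
    { toFun := ((r : EReal) * ·)
      map_zero' := mul_zero _
      map_add' := left_distrib_of_nonneg_of_ne_top (EReal.coe_nonneg.2 hr) (coe_ne_top r) }
  map_sum mulLeft f s

theorem coe_one_sub_mul_add_coe_mul {β : ℝ} (hβ0 : 0 ≤ β) (hβ1 : β ≤ 1) (x : EReal) :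
    ((1 - β : ℝ) : EReal) * x + β * x = x := by
  rw [← right_distrib_of_nonneg (EReal.coe_nonneg.2 (_root_.sub_nonneg.2 hβ1))
    (EReal.coe_nonneg.2 hβ0), ← coe_add, _root_.sub_add_cancel, coe_one, one_mul]

end EReal

namespace Finset

theorem filter_le_succ_of_mem {B : Finset ℕ} {j : ℕ} (hj : j + 1 ∈ B) :
    B.filter (· ≤ j + 1) = insert (j + 1) (B.filter (· ≤ j)) := by
  ext k
  simp only [mem_filter, mem_insert]
  constructor
  · rintro ⟨hk, hkj⟩
    exact (Nat.le_succ_iff.1 hkj).symm.imp id fun h => ⟨hk, h⟩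
  · rintro (rfl | ⟨hk, hkj⟩)
    exacts [⟨hj, le_rfl⟩, ⟨hk, by omega⟩]

theorem filter_le_succ_of_notMem {B : Finset ℕ} {j : ℕ} (hj : j + 1 ∉ B) :
    B.filter (· ≤ j + 1) = B.filter (· ≤ j) := by
  ext k
  simp only [mem_filter]
  constructor
  · rintro ⟨hk, hkj⟩
    exact ⟨hk, (Nat.le_succ_iff.1 hkj).resolve_right fun h => by subst h; exact hj hk⟩
  · rintro ⟨hk, hkj⟩
    exact ⟨hk, by omega⟩

end Finset

open Finset

noncomputable section MaxOneCut

variable (β : ℝ) (ℓ : ℕ → EReal)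

/-- `oneCut β ℓ k j` is the paper's `L_k^j`, and `maxOneCut β ℓ B j` is `Γ_j`. -/
def oneCut (k j : ℕ) : EReal :=
  ((β ^ (j - k) : ℝ) : EReal) * ℓ k
    + ∑ i ∈ Ioc k j, (((1 - β) * β ^ (j - i) : ℝ) : EReal) * ℓ i

def maxOneCut (B : Finset ℕ) (j : ℕ) : EReal :=
  (B.filter (· ≤ j)).sup (oneCut β ℓ · j)

variable {β}

theorem oneCut_self (k : ℕ) : oneCut β ℓ k k = ℓ k := by
  simp [oneCut]

theorem oneCut_succ (hβ : 0 ≤ β) {k j : ℕ} (hkj : k ≤ j) :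
    oneCut β ℓ k (j + 1) = β * oneCut β ℓ k j + ((1 - β : ℝ) : EReal) * ℓ (j + 1) := by
  have hβ' : (0 : EReal) ≤ β := EReal.coe_nonneg.2 hβ
  have weight_succ : ∀ c : ℝ, ∀ i ≤ j,
      ((c * β ^ (j + 1 - i) : ℝ) : EReal) * ℓ i = β * (((c * β ^ (j - i) : ℝ) : EReal) * ℓ i) := by
    intro c i hi
    rw [← mul_assoc, ← EReal.coe_mul, Nat.sub_add_comm hi, pow_succ]
    ring_nf
  have leading := weight_succ 1 k hkj
  simp only [one_mul] at leading
  rw [oneCut, oneCut, EReal.left_distrib_of_nonneg_of_ne_top hβ' (EReal.coe_ne_top β),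
    EReal.coe_mul_sum_of_nonneg _ _ hβ, sum_Ioc_succ_top hkj, leading, Nat.sub_self, pow_zero,
    mul_one, add_assoc,
    sum_congr rfl fun i hi => weight_succ (1 - β) i (mem_Ioc.1 hi).2]

theorem sup_oneCut_succ (hβ : 0 ≤ β) {s : Finset ℕ} (hs : s.Nonempty) {j : ℕ}
    (hsj : ∀ k ∈ s, k ≤ j) :
    s.sup (oneCut β ℓ · (j + 1))
      = β * s.sup (oneCut β ℓ · j) + ((1 - β : ℝ) : EReal) * ℓ (j + 1) := by
  rw [sup_congr rfl fun k hk => oneCut_succ ℓ hβ (hsj k hk)]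
  exact (apply_sup_eq_sup_comp_of_nonempty
    (fun _ _ h => add_le_add_left (mul_le_mul_of_nonneg_left h (EReal.coe_nonneg.2 hβ)) _) hs).symm

variable {B : Finset ℕ}

theorem maxOneCut_one (h1B : 1 ∈ B) (hB : ∀ k ∈ B, 1 ≤ k) : maxOneCut β ℓ B 1 = ℓ 1 := by
  have hB1 : B.filter (· ≤ 1) = {1} := by
    ext k
    simp only [mem_filter, mem_singleton]
    exact ⟨fun ⟨hk, hk1⟩ => by have := hB k hk; omega, by rintro rfl; exact ⟨h1B, le_rfl⟩⟩
  rw [maxOneCut, hB1, sup_singleton, oneCut_self]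

variable {j : ℕ}

theorem maxOneCut_succ_eq_sup (hβ : 0 ≤ β) (hne : (B.filter (· ≤ j)).Nonempty) :
    (B.filter (· ≤ j)).sup (oneCut β ℓ · (j + 1))
      = β * maxOneCut β ℓ B j + ((1 - β : ℝ) : EReal) * ℓ (j + 1) :=
  sup_oneCut_succ ℓ hβ hne fun _ hk => (mem_filter.1 hk).2

theorem maxOneCut_succ_of_mem (hβ0 : 0 ≤ β) (hβ1 : β ≤ 1) (hne : (B.filter (· ≤ j)).Nonempty)
    (hj : j + 1 ∈ B) :
    maxOneCut β ℓ B (j + 1)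
      = ((1 - β : ℝ) : EReal) * ℓ (j + 1) + β * max (maxOneCut β ℓ B j) (ℓ (j + 1)) := by
  rw [maxOneCut, filter_le_succ_of_mem hj, sup_insert, oneCut_self,
    maxOneCut_succ_eq_sup ℓ hβ0 hne, (monotone_mul_left_of_nonneg (EReal.coe_nonneg.2 hβ0)).map_max,
    ← max_add_add_left, EReal.coe_one_sub_mul_add_coe_mul hβ0 hβ1,
    add_comm (_ * maxOneCut β ℓ B j), max_comm]

theorem maxOneCut_succ_of_notMem (hβ : 0 ≤ β) (hne : (B.filter (· ≤ j)).Nonempty)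
    (hj : j + 1 ∉ B) :
    maxOneCut β ℓ B (j + 1) = ((1 - β : ℝ) : EReal) * ℓ (j + 1) + β * maxOneCut β ℓ B j := by
  rw [maxOneCut, filter_le_succ_of_notMem hj, maxOneCut_succ_eq_sup ℓ hβ hne, add_comm]

theorem le_maxOneCut_succ (hβ : 0 ≤ β) (hne : (B.filter (· ≤ j)).Nonempty) :
    β * maxOneCut β ℓ B j + ((1 - β : ℝ) : EReal) * ℓ (j + 1) ≤ maxOneCut β ℓ B (j + 1) := by
  rw [← maxOneCut_succ_eq_sup ℓ hβ hne]
  exact sup_mono (monotone_filter_right B fun _ _ => Nat.le_succ_of_le)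

end MaxOneCut

theorem stmt4_general {n : ℕ} (I : ℕ)
    (β : ℝ) (hβ : β ∈ Set.Ioo (0 : ℝ) 1)
    (ℓ : ℕ → EuclideanSpace ℝ (Fin n) → EReal)
    (B : Finset ℕ) (h1B : 1 ∈ B) (hBsub : ∀ k ∈ B, 1 ≤ k ∧ k ≤ I)
    (L : ℕ → ℕ → EuclideanSpace ℝ (Fin n) → EReal)
    (hL : ∀ k j, 1 ≤ k → k ≤ j → j ≤ I → ∀ u,
      L k j u = ((β ^ (j - k) : ℝ) : EReal) * ℓ k u
        + ∑ i ∈ Finset.Ioc k j, (((1 - β) * β ^ (j - i) : ℝ) : EReal) * ℓ i u)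
    (Γ : ℕ → EuclideanSpace ℝ (Fin n) → EReal)
    (hΓ : ∀ j, 1 ≤ j → j ≤ I → ∀ u,
      Γ j u = (B.filter (fun k => k ≤ j)).sup (fun k => L k j u)) :
    (∀ u, Γ 1 u = ℓ 1 u) ∧
    (∀ j, 2 ≤ j → j ≤ I → ∀ u,
      (j ∈ B → Γ j u = ((1 - β : ℝ) : EReal) * ℓ j u
          + (β : EReal) * max (Γ (j - 1) u) (ℓ j u)) ∧
      (j ∉ B → Γ j u = ((1 - β : ℝ) : EReal) * ℓ j u
          + (β : EReal) * Γ (j - 1) u) ∧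
      (β : EReal) * Γ (j - 1) u + ((1 - β : ℝ) : EReal) * ℓ j u ≤ Γ j u) := by
  obtain ⟨hβ0, hβ1⟩ := hβ
  have hΓ_eq : ∀ j, 1 ≤ j → j ≤ I → ∀ u, Γ j u = maxOneCut β (ℓ · u) B j := by
    intro j hj hjI u
    rw [hΓ j hj hjI u, maxOneCut]
    refine sup_congr rfl fun k hk => ?_
    obtain ⟨hkB, hkj⟩ := mem_filter.1 hk
    exact hL k j (hBsub k hkB).1 hkj hjI u
  refine ⟨fun u => ?_, fun j hj hjI u => ?_⟩
  · rw [hΓ_eq 1 le_rfl (hBsub 1 h1B).2 u]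
    exact maxOneCut_one _ h1B fun k hk => (hBsub k hk).1
  obtain ⟨m, rfl⟩ : ∃ m, j = m + 1 := ⟨j - 1, by omega⟩
  have hne : (B.filter (· ≤ m)).Nonempty := ⟨1, mem_filter.2 ⟨h1B, by omega⟩⟩
  rw [Nat.add_sub_cancel, hΓ_eq (m + 1) (by omega) hjI u, hΓ_eq m (by omega) (by omega) u]
  exact ⟨maxOneCut_succ_of_mem _ hβ0.le hβ1.le hne, maxOneCut_succ_of_notMem _ hβ0.le hne,
    le_maxOneCut_succ _ hβ0.le hne⟩

/-- The max-one-cut bundle model `Γ_j = max_{k ∈ B_j} L_k^j` admits the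
recursive update of step 2 of S-Max1C, and in particular satisfies the model
condition `Γ_j ≥ β Γ_{j-1} + (1-β) ℓ_j`.  Functions with values in
`ℝ ∪ {+∞}` are modeled as `EReal`-valued functions never equal to `⊥`. -/
theorem stmt4 {n : ℕ} (I : ℕ) (hI : 2 ≤ I)
    (β : ℝ) (hβ : β ∈ Set.Ioo (0 : ℝ) 1)
    (ℓ : ℕ → EuclideanSpace ℝ (Fin n) → EReal)
    (hℓbot : ∀ i x, ℓ i x ≠ ⊥)
    (B : Finset ℕ) (h1B : 1 ∈ B) (hBsub : ∀ k ∈ B, 1 ≤ k ∧ k ≤ I)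
    (L : ℕ → ℕ → EuclideanSpace ℝ (Fin n) → EReal)
    (hL : ∀ k j, 1 ≤ k → k ≤ j → j ≤ I → ∀ u,
      L k j u = ((β ^ (j - k) : ℝ) : EReal) * ℓ k u
        + ∑ i ∈ Finset.Ioc k j, (((1 - β) * β ^ (j - i) : ℝ) : EReal) * ℓ i u)
    (Γ : ℕ → EuclideanSpace ℝ (Fin n) → EReal)
    (hΓ : ∀ j, 1 ≤ j → j ≤ I → ∀ u,
      Γ j u = (B.filter (fun k => k ≤ j)).sup (fun k => L k j u)) :
    (∀ u, Γ 1 u = ℓ 1 u) ∧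
    (∀ j, 2 ≤ j → j ≤ I → ∀ u,
      (j ∈ B → Γ j u = ((1 - β : ℝ) : EReal) * ℓ j u
          + (β : EReal) * max (Γ (j - 1) u) (ℓ j u)) ∧
      (j ∉ B → Γ j u = ((1 - β : ℝ) : EReal) * ℓ j u
          + (β : EReal) * Γ (j - 1) u) ∧
      (β : EReal) * Γ (j - 1) u + ((1 - β : ℝ) : EReal) * ℓ j u ≤ Γ j u) :=
  stmt4_general I β hβ ℓ B h1B hBsub L hL Γ hΓ
end

section
/- Let I ≥ 2 be an integer, set β := (I+1 − log(I+1))/(I+1 + log(I+1)) where log is the natural logarithm, and let k be an integer with 1 ≤ k ≤ ⌊I/2⌋. Let W_k, …, W_I be independent square-integrable real random variables on a probability space, all with the same mean m and with E[(W_i − m)²] ≤ σ² for every i, for some σ ≥ 0. Define Q := β^{I−k} W_k + (1−β) Σ_{i=k+1}^{I} β^{I−i} W_i. Then E[(Q − m)²] ≤ (4 log(I+1)/(I+1)) · σ². -/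
/-!
Writing `Q - m = ∑ β_i^I (W_i - m)` with nonnegative weights summing to one, independence gives
`E[(Q - m)²] = ∑ (β_i^I)² Var W_i ≤ (max_i β_i^I) σ²`. The largest weight is `β^(I-k)` or `1 - β`.
With `A = I + 1` one has `1 - β = 2 log A / (A + log A)`, and since `I - k ≥ I / 2`,
`β^(I-k) ≤ exp (-(1 - β)(I - k)) ≤ exp (1 - log A) = e / A`; both are at most `4 log A / A`.
-/

open MeasureTheory ProbabilityTheory Finset Real

theorem Real.log_le_sqrt {x : ℝ} (hx : 0 ≤ x) : log x ≤ √x := by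
  rcases hx.eq_or_lt with rfl | hx
  · simp
  -- `log x = 4 log s ≤ 4 (s - 1) ≤ s ^ 2` for the fourth root `s` of `x`
  set s := √(√x)
  have hs : 0 < s := sqrt_pos.2 (sqrt_pos.2 hx)
  have hlog : log x = 4 * log s := by
    rw [log_sqrt (sqrt_nonneg x), log_sqrt hx.le]; ring
  have hsq : s ^ 2 = √x := sq_sqrt (sqrt_nonneg x)
  nlinarith [log_le_sub_one_of_pos hs, sq_nonneg (s - 2)]

theorem pow_le_exp_neg_one_sub_mul {b : ℝ} (hb : 0 ≤ b) (n : ℕ) :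
    b ^ n ≤ exp (-((1 - b) * n)) := by
  have h : b ≤ exp (-(1 - b)) := by linarith [add_one_le_exp (-(1 - b))]
  calc b ^ n ≤ exp (-(1 - b)) ^ n := pow_le_pow_left₀ hb h n
    _ = exp (-((1 - b) * n)) := by rw [← exp_nat_mul]; ring_nf

/-- The paper's choice of `β` for `A = I + 1` iterates. -/
noncomputable def logRatio (A : ℝ) : ℝ := (A - log A) / (A + log A)

section logRatio

variable {A : ℝ}

theorem one_lt_log_of_three_le (hA : 3 ≤ A) : 1 < log A := by
  rw [lt_log_iff_exp_lt (by linarith)]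
  exact exp_one_lt_three.trans_le hA

theorem one_sub_logRatio (hA : 1 ≤ A) : 1 - logRatio A = 2 * log A / (A + log A) := by
  have : 0 < A + log A := by linarith [log_nonneg hA]
  rw [logRatio]; field_simp; ring

theorem logRatio_mem_Icc (hA : 1 ≤ A) : logRatio A ∈ Set.Icc 0 1 := by
  have hL := log_nonneg hA
  have hLA : log A ≤ A := log_le_self (by linarith)
  refine ⟨div_nonneg (by linarith) (by linarith), ?_⟩
  have := one_sub_logRatio hA
  have : 0 ≤ 2 * log A / (A + log A) := by positivity
  linarith

theorem one_sub_logRatio_le (hA : 1 ≤ A) : 1 - logRatio A ≤ 4 * log A / A := by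
  have hL := log_nonneg hA
  rw [one_sub_logRatio hA, div_le_div_iff₀ (by linarith) (by linarith)]
  nlinarith

theorem logRatio_pow_le (hA : 3 ≤ A) {n : ℕ} (hn : A ≤ 2 * n + 1) :
    logRatio A ^ n ≤ 4 * log A / A := by
  set L := log A
  have hL : 1 < L := one_lt_log_of_three_le hA
  have hLsq : L ^ 2 ≤ A := by
    have h := log_le_sqrt (by linarith : (0 : ℝ) ≤ A)
    nlinarith [sq_sqrt (by linarith : (0 : ℝ) ≤ A), sqrt_nonneg A]
  have hexponent : L - 1 ≤ (1 - logRatio A) * n := by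
    rw [one_sub_logRatio (by linarith), div_mul_eq_mul_div, le_div_iff₀ (by linarith)]
    nlinarith
  calc logRatio A ^ n ≤ exp (-((1 - logRatio A) * n)) :=
        pow_le_exp_neg_one_sub_mul (logRatio_mem_Icc (by linarith)).1 n
    _ ≤ exp (1 - L) := exp_le_exp.2 (by linarith)
    _ = exp 1 / A := by rw [exp_sub, exp_log (by linarith)]
    _ ≤ 4 * L / A := by gcongr; linarith [exp_one_lt_three]

end logRatio

/-- The weights `β_i^I` of the convex combination `Q = ∑_{i=k}^I β_i^I W_i`. -/
noncomputable def geomWeight (β : ℝ) (k I i : ℕ) : ℝ :=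
  if i = k then β ^ (I - k) else (1 - β) * β ^ (I - i)

section geomWeight

variable {β : ℝ} {k I : ℕ}

theorem sum_geomWeight_mul (β : ℝ) (f : ℕ → ℝ) (hkI : k ≤ I) :
    ∑ i ∈ Icc k I, geomWeight β k I i * f i
      = β ^ (I - k) * f k + (1 - β) * ∑ i ∈ Icc (k + 1) I, β ^ (I - i) * f i := by
  rw [← add_sum_Ioc_eq_sum_Icc hkI, Icc_add_one_left_eq_Ioc, mul_sum]
  congr 1
  · simp [geomWeight]
  · refine sum_congr rfl fun i hi => ?_
    have : i ≠ k := (mem_Ioc.1 hi).1.ne'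
    simp [geomWeight, this, mul_assoc]

theorem sum_geomWeight (β : ℝ) (hkI : k ≤ I) : ∑ i ∈ Icc k I, geomWeight β k I i = 1 := by
  have hreflect : ∑ i ∈ Icc (k + 1) I, β ^ (I - i) = ∑ j ∈ range (I - k), β ^ j := by
    rw [← Finset.Ico_add_one_right_eq_Icc, sum_Ico_reflect _ _ le_rfl, ← Nat.Ico_zero_eq_range]
    rw [Nat.sub_self, Nat.add_sub_add_right]
  simpa [hreflect, mul_neg_geom_sum] using sum_geomWeight_mul β (fun _ => 1) hkI

theorem geomWeight_nonneg (h0 : 0 ≤ β) (h1 : β ≤ 1) (i : ℕ) : 0 ≤ geomWeight β k I i := by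
  unfold geomWeight
  split_ifs
  · positivity
  · exact mul_nonneg (sub_nonneg.2 h1) (pow_nonneg h0 _)

theorem geomWeight_le_max (h0 : 0 ≤ β) (h1 : β ≤ 1) (i : ℕ) :
    geomWeight β k I i ≤ max (β ^ (I - k)) (1 - β) := by
  unfold geomWeight
  split_ifs
  · exact le_max_left _ _
  · exact (mul_le_of_le_one_right (sub_nonneg.2 h1) (pow_le_one₀ h0 h1)).trans (le_max_right _ _)

end geomWeight

theorem Finset.sum_sq_le_mul_sum {ι : Type*} {s : Finset ι} {g : ι → ℝ} {M : ℝ}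
    (h0 : ∀ i ∈ s, 0 ≤ g i) (hM : ∀ i ∈ s, g i ≤ M) :
    ∑ i ∈ s, g i ^ 2 ≤ M * ∑ i ∈ s, g i := by
  rw [mul_sum]
  exact sum_le_sum fun i hi => by rw [sq]; exact mul_le_mul_of_nonneg_right (hM i hi) (h0 i hi)

theorem integral_sq_weighted_sum_sub_le {Ω ι : Type*} [MeasurableSpace Ω] {μ : Measure Ω}
    [IsProbabilityMeasure μ] {s : Finset ι} {W : ι → Ω → ℝ} {g : ι → ℝ} {m σ : ℝ}
    (hW2 : ∀ i ∈ s, MemLp (W i) 2 μ)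
    (hindep : (s : Set ι).Pairwise fun i j => IndepFun (W i) (W j) μ)
    (hmean : ∀ i ∈ s, μ[W i] = m)
    (hvar : ∀ i ∈ s, ∫ ω, (W i ω - m) ^ 2 ∂μ ≤ σ ^ 2)
    (hg : ∑ i ∈ s, g i = 1) :
    ∫ ω, (∑ i ∈ s, g i * W i ω - m) ^ 2 ∂μ ≤ (∑ i ∈ s, g i ^ 2) * σ ^ 2 := by
  set Y : ι → Ω → ℝ := fun i ω => g i * W i ω
  have hY : ∀ i ∈ s, MemLp (Y i) 2 μ := fun i hi => (hW2 i hi).const_mul (g i)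
  have hYindep : (s : Set ι).Pairwise fun i j => IndepFun (Y i) (Y j) μ :=
    fun i hi j hj hij =>
      (hindep hi hj hij).comp (measurable_const_mul (g i)) (measurable_const_mul (g j))
  have hvarW : ∀ i ∈ s, variance (W i) μ ≤ σ ^ 2 := fun i hi => by
    rw [variance_eq_integral (hW2 i hi).aemeasurable, hmean i hi]
    exact hvar i hi
  have hmeanY : μ[∑ i ∈ s, Y i] = m := by
    simp only [Finset.sum_apply]
    rw [integral_finsetSum s fun i hi => (hY i hi).integrable one_le_two]
    simp only [Y, integral_const_mul]
    rw [sum_congr rfl fun i hi => by rw [hmean i hi], ← sum_mul, hg, one_mul]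
  calc ∫ ω, (∑ i ∈ s, g i * W i ω - m) ^ 2 ∂μ = variance (∑ i ∈ s, Y i) μ := by
        rw [variance_eq_integral (memLp_finsetSum' s hY).aemeasurable, hmeanY]
        simp only [Y, Finset.sum_apply]
    _ = ∑ i ∈ s, g i ^ 2 * variance (W i) μ := by
        rw [IndepFun.variance_sum hY hYindep]
        simp only [Y, variance_const_mul]
    _ ≤ ∑ i ∈ s, g i ^ 2 * σ ^ 2 :=
        sum_le_sum fun i hi => mul_le_mul_of_nonneg_left (hvarW i hi) (sq_nonneg _)
    _ = (∑ i ∈ s, g i ^ 2) * σ ^ 2 := by rw [sum_mul]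

theorem stmt5_general {Ω : Type*} [MeasurableSpace Ω] {μ : Measure Ω}
    [IsProbabilityMeasure μ]
    (I : ℕ) (hI : 2 ≤ I)
    (β : ℝ)
    (hβ : β = ((I : ℝ) + 1 - Real.log ((I : ℝ) + 1))
        / ((I : ℝ) + 1 + Real.log ((I : ℝ) + 1)))
    (k : ℕ) (hk2 : k ≤ I / 2)
    (W : ℕ → Ω → ℝ)
    (hindep : iIndepFun
      (fun i : {x // x ∈ Finset.Icc k I} => W i.1) μ)
    (m σ : ℝ)
    (hW2 : ∀ i, k ≤ i → i ≤ I → MemLp (W i) 2 μ)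
    (hWmean : ∀ i, k ≤ i → i ≤ I → (∫ ω, W i ω ∂μ) = m)
    (hWvar : ∀ i, k ≤ i → i ≤ I → (∫ ω, (W i ω - m) ^ 2 ∂μ) ≤ σ ^ 2) :
    (∫ ω, ((β ^ (I - k) * W k ω
        + (1 - β) * ∑ i ∈ Finset.Icc (k + 1) I, β ^ (I - i) * W i ω) - m) ^ 2 ∂μ)
      ≤ (4 * Real.log ((I : ℝ) + 1) / ((I : ℝ) + 1)) * σ ^ 2 := by
  have hkI : k ≤ I := hk2.trans (Nat.div_le_self I 2)
  have hA : (3 : ℝ) ≤ I + 1 := by norm_cast; omega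
  rw [← logRatio] at hβ
  obtain ⟨hβ0, hβ1⟩ := hβ ▸ logRatio_mem_Icc (by linarith)
  have hweight : ∀ i, geomWeight β k I i ≤ 4 * log ((I : ℝ) + 1) / (I + 1) := fun i =>
    (geomWeight_le_max hβ0 hβ1 i).trans <| max_le
      (hβ ▸ logRatio_pow_le hA (by norm_cast; omega)) (hβ ▸ one_sub_logRatio_le (by linarith))
  have hpair : (↑(Icc k I) : Set ℕ).Pairwise fun i j => IndepFun (W i) (W j) μ :=
    fun i hi j hj hij => hindep.indepFun (i := ⟨i, hi⟩) (j := ⟨j, hj⟩) (by simpa using hij)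
  have hQ : ∀ ω, β ^ (I - k) * W k ω + (1 - β) * ∑ i ∈ Icc (k + 1) I, β ^ (I - i) * W i ω
      = ∑ i ∈ Icc k I, geomWeight β k I i * W i ω :=
    fun ω => (sum_geomWeight_mul β (W · ω) hkI).symm
  simp only [hQ]
  refine (integral_sq_weighted_sum_sub_le (fun i hi => hW2 i (mem_Icc.1 hi).1 (mem_Icc.1 hi).2)
    hpair (fun i hi => hWmean i (mem_Icc.1 hi).1 (mem_Icc.1 hi).2)
    (fun i hi => hWvar i (mem_Icc.1 hi).1 (mem_Icc.1 hi).2) (sum_geomWeight β hkI)).trans ?_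
  gcongr
  calc ∑ i ∈ Icc k I, geomWeight β k I i ^ 2
      ≤ 4 * log ((I : ℝ) + 1) / (I + 1) * ∑ i ∈ Icc k I, geomWeight β k I i :=
        sum_sq_le_mul_sum (fun i _ => geomWeight_nonneg hβ0 hβ1 i) (fun i _ => hweight i)
    _ = 4 * log ((I : ℝ) + 1) / (I + 1) := by rw [sum_geomWeight β hkI, mul_one]

/-- Variance bound for the geometric convex combination
`Q = β^{I-k} W_k + (1-β) Σ_{i=k+1}^{I} β^{I-i} W_i` with
`β = (I+1 - log(I+1))/(I+1 + log(I+1))`: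
`E[(Q - m)²] ≤ 4 log(I+1)/(I+1) · σ²`. -/
theorem stmt5 {Ω : Type*} [MeasurableSpace Ω] {μ : Measure Ω}
    [IsProbabilityMeasure μ]
    (I : ℕ) (hI : 2 ≤ I)
    (β : ℝ)
    (hβ : β = ((I : ℝ) + 1 - Real.log ((I : ℝ) + 1))
        / ((I : ℝ) + 1 + Real.log ((I : ℝ) + 1)))
    (k : ℕ) (hk1 : 1 ≤ k) (hk2 : k ≤ I / 2)
    (W : ℕ → Ω → ℝ)
    (hWmeas : ∀ i, k ≤ i → i ≤ I → Measurable (W i))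
    (hindep : iIndepFun
      (fun i : {x // x ∈ Finset.Icc k I} => W i.1) μ)
    (m σ : ℝ) (hσ : 0 ≤ σ)
    (hW2 : ∀ i, k ≤ i → i ≤ I → MemLp (W i) 2 μ)
    (hWmean : ∀ i, k ≤ i → i ≤ I → (∫ ω, W i ω ∂μ) = m)
    (hWvar : ∀ i, k ≤ i → i ≤ I → (∫ ω, (W i ω - m) ^ 2 ∂μ) ≤ σ ^ 2) :
    (∫ ω, ((β ^ (I - k) * W k ω
        + (1 - β) * ∑ i ∈ Finset.Icc (k + 1) I, β ^ (I - i) * W i ω) - m) ^ 2 ∂μ)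
      ≤ (4 * Real.log ((I : ℝ) + 1) / ((I : ℝ) + 1)) * σ ^ 2 :=
  stmt5_general I hI β hβ k hk2 W hindep m σ hW2 hWmean hWvar
end

section
/- Let B be a nonempty finite index set and σ_X ≥ 0. Let (X_k)_{k∈B} and (Y_k)_{k∈B} be real random variables on a probability space such that for every k ∈ B: Y_k ≤ X_k almost surely, Y_k is integrable, X_k is square-integrable, E[X_k] = 0, and Var(X_k) ≤ σ_X². Then E[ max_{k∈B} Y_k ] ≤ 2 σ_X √(|B| − 1). -/
/-!
Fix `j ∈ B` and let `M = max_k X_k`. Since `E[X_j] = 0`, `E[max_k Y_k] ≤ E[M] = E[M - X_j]`, and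
pointwise `(M - X_j)² ≤ ∑_{k ≠ j} (X_k - X_j)²` because `M` is one of the `X_k`. Cauchy–Schwarz
gives `E[M - X_j] ≤ √(E[(M - X_j)²])`, and each `E[(X_k - X_j)²] ≤ 2 E[X_k²] + 2 E[X_j²] ≤ 4 σ_X²`,
so `E[M - X_j] ≤ √(4 σ_X² (|B| - 1)) = 2 σ_X √(|B| - 1)`.
-/

open MeasureTheory ProbabilityTheory

theorem Finset.sq_sup'_sub_le_sum_erase {ι : Type*} [DecidableEq ι] {s : Finset ι}
    (H : s.Nonempty) (f : ι → ℝ) (j : ι) :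
    (s.sup' H f - f j) ^ 2 ≤ ∑ k ∈ s.erase j, (f k - f j) ^ 2 := by
  obtain ⟨i, hi, hmax⟩ := s.exists_mem_eq_sup' H f
  rw [hmax, Finset.sum_erase s (by rw [sub_self, zero_pow two_ne_zero])]
  exact Finset.single_le_sum (fun k _ => sq_nonneg (f k - f j)) hi

namespace MeasureTheory

variable {Ω : Type*} [MeasurableSpace Ω] {μ : Measure Ω}

theorem MemLp.finset_sup' {ι E : Type*} [NormedAddCommGroup E] [Lattice E] [HasSolidNorm E]
    [IsOrderedAddMonoid E] {p : ENNReal} {s : Finset ι} (H : s.Nonempty) {f : ι → Ω → E}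
    (hf : ∀ k ∈ s, MemLp (f k) p μ) : MemLp (s.sup' H f) p μ :=
  Finset.sup'_induction (p := fun g => MemLp g p μ) H f (fun _ h₁ _ h₂ => h₁.sup h₂) hf

theorem Integrable.finset_sup' {ι : Type*} {s : Finset ι} (H : s.Nonempty) {f : ι → Ω → ℝ}
    (hf : ∀ k ∈ s, Integrable (f k) μ) : Integrable (s.sup' H f) μ :=
  memLp_one_iff_integrable.1 <|
    MemLp.finset_sup' H fun k hk => memLp_one_iff_integrable.2 (hf k hk)

theorem integral_le_sqrt_integral_sq [IsProbabilityMeasure μ] {f : Ω → ℝ} (hf : MemLp f 2 μ) :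
    ∫ ω, f ω ∂μ ≤ √(∫ ω, f ω ^ 2 ∂μ) := by
  refine Real.le_sqrt_of_sq_le ?_
  have h := variance_nonneg f μ
  rw [variance_eq_sub hf] at h
  simpa [sub_nonneg] using h

theorem integral_sub_sq_le {f g : Ω → ℝ} (hf : MemLp f 2 μ) (hg : MemLp g 2 μ) :
    ∫ ω, (f ω - g ω) ^ 2 ∂μ ≤ 2 * ∫ ω, f ω ^ 2 ∂μ + 2 * ∫ ω, g ω ^ 2 ∂μ := by
  rw [← integral_const_mul, ← integral_const_mul,
    ← integral_add (hf.integrable_sq.const_mul 2) (hg.integrable_sq.const_mul 2)]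
  exact integral_mono (hf.sub hg).integrable_sq
    ((hf.integrable_sq.const_mul 2).add (hg.integrable_sq.const_mul 2))
    fun ω => by nlinarith [sq_nonneg (f ω + g ω)]

theorem integral_sq_finset_sup'_sub_le {ι : Type*} [DecidableEq ι] {s : Finset ι}
    (H : s.Nonempty) {f : ι → Ω → ℝ} (hf : ∀ k ∈ s, MemLp (f k) 2 μ) {j : ι} (hj : j ∈ s) :
    ∫ ω, ((s.sup' H fun k => f k ω) - f j ω) ^ 2 ∂μ
      ≤ ∑ k ∈ s.erase j, ∫ ω, (f k ω - f j ω) ^ 2 ∂μ := by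
  have hsup : MemLp (fun ω => s.sup' H fun k => f k ω) 2 μ := by
    simpa only [← Finset.sup'_apply] using MemLp.finset_sup' H hf
  have hint : ∀ k ∈ s.erase j, Integrable (fun ω => (f k ω - f j ω) ^ 2) μ := fun k hk =>
    ((hf k (Finset.mem_of_mem_erase hk)).sub (hf j hj)).integrable_sq
  rw [← integral_finsetSum _ hint]
  exact integral_mono (hsup.sub (hf j hj)).integrable_sq (integrable_finsetSum _ hint)
    fun ω => Finset.sq_sup'_sub_le_sum_erase H (fun k => f k ω) j

end MeasureTheory

/-- If `Y_k ≤ X_k` a.s. with `E[X_k] = 0` and `Var(X_k) ≤ σX²` for all `k` in a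
nonempty finite index set `B` (no independence assumed), then
`E[max_{k ∈ B} Y_k] ≤ 2 σX √(|B| - 1)`. -/
theorem stmt7 {Ω : Type*} {ι : Type*} [MeasurableSpace Ω] {μ : Measure Ω}
    [IsProbabilityMeasure μ]
    (B : Finset ι) (hBne : B.Nonempty)
    (σX : ℝ) (hσX : 0 ≤ σX)
    (X Y : ι → Ω → ℝ)
    (hYX : ∀ k ∈ B, ∀ᵐ ω ∂μ, Y k ω ≤ X k ω)
    (hYint : ∀ k ∈ B, Integrable (Y k) μ)
    (hX2 : ∀ k ∈ B, MemLp (X k) 2 μ)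
    (hXmean : ∀ k ∈ B, (∫ ω, X k ω ∂μ) = 0)
    (hXvar : ∀ k ∈ B, variance (X k) μ ≤ σX ^ 2) :
    (∫ ω, (B.sup' hBne fun k => Y k ω) ∂μ)
      ≤ 2 * σX * Real.sqrt ((B.card : ℝ) - 1) := by
  classical
  obtain ⟨j, hj⟩ := id hBne
  have hM : MemLp (fun ω => B.sup' hBne fun k => X k ω) 2 μ := by
    simpa only [← Finset.sup'_apply] using MemLp.finset_sup' hBne hX2
  have hsecond : ∀ k ∈ B, ∫ ω, X k ω ^ 2 ∂μ ≤ σX ^ 2 := fun k hk => by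
    rw [← variance_of_integral_eq_zero (hX2 k hk).aemeasurable (hXmean k hk)]
    exact hXvar k hk
  calc ∫ ω, (B.sup' hBne fun k => Y k ω) ∂μ
      ≤ ∫ ω, (B.sup' hBne fun k => X k ω) ∂μ := by
        refine integral_mono_ae ?_ (hM.integrable one_le_two) ?_
        · simpa only [← Finset.sup'_apply] using Integrable.finset_sup' hBne hYint
        filter_upwards [(ae_ball_iff B.countable_toSet).2 hYX] with ω hω
        exact Finset.sup'_mono_fun hω
    _ = ∫ ω, (B.sup' hBne fun k => X k ω) - X j ω ∂μ := by
        rw [integral_sub (hM.integrable one_le_two) ((hX2 j hj).integrable one_le_two),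
          hXmean j hj, sub_zero]
    _ ≤ √(∫ ω, ((B.sup' hBne fun k => X k ω) - X j ω) ^ 2 ∂μ) :=
        integral_le_sqrt_integral_sq (hM.sub (hX2 j hj))
    _ ≤ √(∑ k ∈ B.erase j, ∫ ω, (X k ω - X j ω) ^ 2 ∂μ) :=
        Real.sqrt_le_sqrt (integral_sq_finset_sup'_sub_le hBne hX2 hj)
    _ ≤ √(∑ _k ∈ B.erase j, 4 * σX ^ 2) := by
        gcongr with k hk
        have hk := Finset.mem_of_mem_erase hk
        linarith [integral_sub_sq_le (hX2 k hk) (hX2 j hj), hsecond k hk, hsecond j hj]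
    _ = 2 * σX * √((B.card : ℝ) - 1) := by
        rw [Finset.sum_const, Finset.card_erase_of_mem hj, nsmul_eq_mul,
          Nat.cast_pred (Finset.card_pos.2 hBne),
          show ((B.card : ℝ) - 1) * (4 * σX ^ 2) = (2 * σX) ^ 2 * ((B.card : ℝ) - 1) by ring,
          Real.sqrt_mul (sq_nonneg _), Real.sqrt_sq (by positivity)]
end

section
/- Let C ≥ 2 be a real number and define β := (C − log C)/(C + log C), where log denotes the natural logarithm. Then β^C ≤ 1/C (with β^C the real power) and β ≥ 1/3. -/
/-- For `C ≥ 2` and `β = (C - log C)/(C + log C)` one has `β^C ≤ 1/C`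
(real exponentiation) and `β ≥ 1/3`. -/
theorem stmt8 (C : ℝ) (hC : 2 ≤ C) :
    ((C - Real.log C) / (C + Real.log C)) ^ C ≤ 1 / C ∧
      (1 : ℝ) / 3 ≤ (C - Real.log C) / (C + Real.log C) := by
  set L := Real.log C with hLdef
  have hC0 : (0:ℝ) < C := by linarith
  have hL0 : 0 < L := Real.log_pos (by linarith)
  have hs : Real.sqrt C ^ 2 = C := Real.sq_sqrt hC0.le
  have hls : Real.log (Real.sqrt C) ≤ Real.sqrt C - 1 :=
    Real.log_le_sub_one_of_pos (Real.sqrt_pos.mpr hC0)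
  have hlog : Real.log (Real.sqrt C) = L / 2 := by
    rw [Real.log_sqrt hC0.le]
  have hhalf : L ≤ C / 2 := by nlinarith [sq_nonneg (Real.sqrt C - 2)]
  have hden : 0 < C + L := by linarith
  have hnum : 0 < C - L := by linarith
  have hβ : 0 < (C - L) / (C + L) := div_pos hnum hden
  constructor
  · have heq : (C - L) / (C + L) - 1 = -(2 * L) / (C + L) := by
      field_simp; ring
    have h3 : -(2 * L) / (C + L) ≤ -L / C := by
      rw [div_le_div_iff₀ hden hC0]
      nlinarith
    have hlogβ : Real.log ((C - L) / (C + L)) ≤ -L / C := by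
      have h1 := Real.log_le_sub_one_of_pos hβ
      linarith [heq ▸ h1]
    have hmul : Real.log ((C - L) / (C + L)) * C ≤ -L := by
      have := mul_le_mul_of_nonneg_right hlogβ hC0.le
      calc Real.log ((C - L) / (C + L)) * C ≤ (-L / C) * C := this
        _ = -L := by field_simp
    calc ((C - L) / (C + L)) ^ C
        = Real.exp (Real.log ((C - L) / (C + L)) * C) :=
          Real.rpow_def_of_pos hβ C
      _ ≤ Real.exp (-L) := Real.exp_le_exp.mpr hmul
      _ = 1 / C := by rw [Real.exp_neg, Real.exp_log hC0, one_div]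
  · rw [div_le_div_iff₀ (by norm_num) hden]
    linarith
end

section
/- Let I ≥ 2 be an integer and set β := (I+1 − log(I+1))/(I+1 + log(I+1)), where log is the natural logarithm. Then (1−β)/(1+β) = log(I+1)/(I+1) and β^I ≤ 3 log(I+1)/(I+1). -/
/-- For `I ≥ 2` and `β = (I+1 - log(I+1))/(I+1 + log(I+1))`:
`(1-β)/(1+β) = log(I+1)/(I+1)` and `β^I ≤ 3 log(I+1)/(I+1)`. -/
theorem stmt10 (I : ℕ) (hI : 2 ≤ I) (β : ℝ)
    (hβ : β = ((I : ℝ) + 1 - Real.log ((I : ℝ) + 1))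
        / ((I : ℝ) + 1 + Real.log ((I : ℝ) + 1))) :
    (1 - β) / (1 + β) = Real.log ((I : ℝ) + 1) / ((I : ℝ) + 1) ∧
      β ^ I ≤ 3 * Real.log ((I : ℝ) + 1) / ((I : ℝ) + 1) := by
  set N : ℝ := (I : ℝ) + 1 with hNdef
  set L : ℝ := Real.log N with hLdef
  have hI2 : (2:ℝ) ≤ (I:ℝ) := by exact_mod_cast hI
  have hN3 : (3:ℝ) ≤ N := by rw [hNdef]; linarith
  have hN0 : (0:ℝ) < N := by linarith
  have hN1 : (1:ℝ) < N := by linarith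
  have hL0 : 0 < L := Real.log_pos hN1
  have hLN : L < N := by have := Real.log_le_sub_one_of_pos hN0; linarith
  have hL1 : 1 ≤ L := by
    have he : Real.exp 1 < N :=
      lt_of_lt_of_le (by linarith [Real.exp_one_lt_d9]) hN3
    have h := Real.log_lt_log (Real.exp_pos 1) he
    rw [Real.log_exp] at h
    linarith
  have hden : 0 < N + L := by linarith
  have h1b : 1 + β = 2 * N / (N + L) := by
    rw [hβ]
    field_simp
    ring
  have h2b : 1 - β = 2 * L / (N + L) := by
    rw [hβ]
    field_simp
    ring
  constructor
  · rw [h1b, h2b]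
    rw [div_div_div_comm]
    rw [div_self hden.ne']
    rw [div_one]
    rw [div_eq_div_iff (by linarith : 2 * N ≠ 0) hN0.ne']
    ring
  · have hβ0 : 0 ≤ β := by
      rw [hβ]
      exact div_nonneg (by linarith) hden.le
    have hstep : β ≤ Real.exp (-(L / N)) := by
      have h1 : β ≤ Real.exp (β - 1) := by
        have := Real.add_one_le_exp (β - 1)
        linarith
      have h2 : β - 1 ≤ -(L / N) := by
        have hb : β - 1 = -(2 * L / (N + L)) := by linarith
        rw [hb, neg_le_neg_iff, div_le_div_iff₀ hN0 hden]
        nlinarith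
      exact h1.trans (Real.exp_le_exp.mpr h2)
    have hpow : β ^ I ≤ Real.exp (-(L / N)) ^ I :=
      pow_le_pow_left₀ hβ0 hstep I
    have hexp : Real.exp (-(L / N)) ^ I = Real.exp (-(L / N) * I) := by
      rw [← Real.exp_nat_mul]
      ring_nf
    have hIN : (I : ℝ) = N - 1 := by rw [hNdef]; ring
    have harg : -(L / N) * (I : ℝ) = L / N - L := by
      rw [hIN]
      field_simp
      ring
    have hexpL : Real.exp L = N := Real.exp_log hN0
    have hfinal : Real.exp (L / N - L) ≤ 3 * L / N := by
      rw [Real.exp_sub, hexpL]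
      have h3 : Real.exp (L / N) ≤ 3 := by
        have hle : L / N ≤ 1 := by
          rw [div_le_one hN0]; linarith
        calc Real.exp (L / N) ≤ Real.exp 1 := Real.exp_le_exp.mpr hle
          _ ≤ 3 := by linarith [Real.exp_one_lt_d9]
      rw [div_le_div_iff₀ hN0 hN0]
      nlinarith [Real.exp_pos (L / N)]
    calc β ^ I ≤ Real.exp (-(L / N)) ^ I := hpow
      _ = Real.exp (-(L / N) * I) := hexp
      _ = Real.exp (L / N - L) := by rw [harg]
      _ ≤ 3 * L / N := hfinal
end

section
/- Let I ≥ 1 be an integer and set β := (I+1 − log(I+1))/(I+1 + log(I+1)), where log is the natural logarithm. Then β^{I−1} ≤ 18 log(I+1)/(I+1). -/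
/-- For `I ≥ 1` and `β = (I+1 - log(I+1))/(I+1 + log(I+1))`:
`β^(I-1) ≤ 18 log(I+1)/(I+1)`. -/
theorem stmt11 (I : ℕ) (hI : 1 ≤ I) (β : ℝ)
    (hβ : β = ((I : ℝ) + 1 - Real.log ((I : ℝ) + 1))
        / ((I : ℝ) + 1 + Real.log ((I : ℝ) + 1))) :
    β ^ (I - 1) ≤ 18 * Real.log ((I : ℝ) + 1) / ((I : ℝ) + 1) := by
  set x : ℝ := (I : ℝ) + 1 with hx
  have hI1 : (1:ℝ) ≤ (I:ℝ) := by exact_mod_cast hI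
  have hx2 : (2:ℝ) ≤ x := by rw [hx]; linarith
  set L := Real.log x with hLdef
  have hL0 : 0 < L := Real.log_pos (by linarith)
  have hLhalf : (1/2 : ℝ) ≤ L := by
    have h2 := Real.log_two_gt_d9
    have h3 : Real.log 2 ≤ L := Real.log_le_log (by norm_num) hx2
    linarith
  have hLx : L ≤ x / 2 := by
    have hxpos : (0:ℝ) < x := by linarith
    have hs : 0 < Real.sqrt x := Real.sqrt_pos.mpr hxpos
    have h1 : Real.log (Real.sqrt x) ≤ Real.sqrt x - 1 :=
      Real.log_le_sub_one_of_pos hs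
    have h2 : Real.log (Real.sqrt x) = L / 2 := by
      rw [Real.log_sqrt (le_of_lt hxpos)]
    have h4 : Real.sqrt x ^ 2 = x := Real.sq_sqrt (le_of_lt hxpos)
    nlinarith [sq_nonneg (Real.sqrt x - 2)]
  have hden : 0 < x + L := by linarith
  have hnum : 0 < x - L := by linarith
  have hβpos : 0 < β := by rw [hβ]; exact div_pos hnum hden
  have hβ3 : 1/3 ≤ β := by
    rw [hβ, le_div_iff₀ hden]; linarith
  have hβexp : β ≤ Real.exp (-(2*L)/(x+L)) := by
    have h := Real.add_one_le_exp (-(2*L)/(x+L))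
    have hβeq : β = -(2*L)/(x+L) + 1 := by
      rw [hβ]; field_simp; ring
    linarith [hβeq ▸ le_refl β, h]
  have hpow : β ^ (I+1) ≤ 1 / x := by
    have h1 : β ^ (I+1) ≤ Real.exp (-(2*L)/(x+L)) ^ (I+1) :=
      pow_le_pow_left₀ (le_of_lt hβpos) hβexp _
    rw [← Real.exp_nat_mul] at h1
    have hcast : ((I+1 : ℕ) : ℝ) = x := by push_cast [hx]; ring
    have h2 : ((I+1 : ℕ) : ℝ) * (-(2*L)/(x+L)) ≤ -L := by
      rw [hcast, ← mul_div_assoc, div_le_iff₀ hden]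
      nlinarith
    have h3 : Real.exp (((I+1:ℕ):ℝ) * (-(2*L)/(x+L))) ≤ Real.exp (-L) :=
      Real.exp_le_exp.mpr h2
    have h4 : Real.exp (-L) = 1 / x := by
      rw [Real.exp_neg, hLdef, Real.exp_log (by linarith)]
      exact one_div x ▸ rfl
    linarith
  have hsplit : β ^ (I+1) = β ^ (I-1) * β ^ 2 := by
    rw [← pow_add]
    congr 1
    omega
  have hβsq : (1/9 : ℝ) ≤ β ^ 2 := by nlinarith
  have hfin : β ^ (I-1) ≤ 9 / x := by
    have hp : 0 < β ^ (I-1) := pow_pos hβpos _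
    have key : β ^ (I-1) * (1/9) ≤ 1/x := by
      calc β ^ (I-1) * (1/9) ≤ β ^ (I-1) * β ^ 2 := by nlinarith
        _ = β ^ (I+1) := hsplit.symm
        _ ≤ 1/x := hpow
    have h9 : (9:ℝ)/x = 9*(1/x) := by ring
    linarith
  calc β ^ (I-1) ≤ 9 / x := hfin
    _ ≤ 18 * L / x := by
        have hxpos : (0:ℝ) < x := by linarith
        rw [div_le_div_iff₀ hxpos hxpos]
        nlinarith
end
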